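/- The persistence module over the poset with two incomparable minimal elements a, b both below c, with c below d, assigning K to a and b, K² to c, K to d, with maps e ↦ (0,e) from a, e ↦ (e,0) from b, and (x,y) ↦ x+y from c to d, is indecomposable. -/

import Mathlib

theorem Submodule.le_of_map_le_of_comp_eq_id {R M N : Type*} [Semiring R] [AddCommMonoid M]
    [AddCommMonoid N] [Module R M] [Module R N] {f : M →ₗ[R] N} {g : N →ₗ[R] M}
    (hgf : g ∘ₗ f = LinearMap.id) {p q : Submodule R M} {r : Submodule R N}
    (hf : p.map f ≤ r) (hg : r.map g ≤ q) : p ≤ q :=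
  calc p = (p.map f).map g := by rw [← Submodule.map_comp, hgf, Submodule.map_id]
    _ ≤ r.map g := Submodule.map_mono hf
    _ ≤ q := hg

namespace TwoPointFork

variable {K : Type*} [Field K]

def IsSubfunctor (Ua Ub : Submodule K K) (Uc : Submodule K (Fin 2 → K)) (Ud : Submodule K K) :
    Prop :=
  Ua.map (LinearMap.single K (fun _ : Fin 2 => K) 1) ≤ Uc ∧
    Ub.map (LinearMap.single K (fun _ : Fin 2 => K) 0) ≤ Uc ∧
    Uc.map ((LinearMap.proj 0 : (Fin 2 → K) →ₗ[K] K) + LinearMap.proj 1) ≤ Ud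

theorem sum_proj_comp_single (i : Fin 2) :
    ((LinearMap.proj 0 : (Fin 2 → K) →ₗ[K] K) + LinearMap.proj 1) ∘ₗ
      LinearMap.single K (fun _ : Fin 2 => K) i = LinearMap.id := by
  ext
  fin_cases i <;> simp

namespace IsSubfunctor

variable {Ua Ub Ud : Submodule K K} {Uc : Submodule K (Fin 2 → K)}

theorem a_le_d (hU : IsSubfunctor Ua Ub Uc Ud) : Ua ≤ Ud :=
  Submodule.le_of_map_le_of_comp_eq_id (sum_proj_comp_single 1) hU.1 hU.2.2

theorem b_le_d (hU : IsSubfunctor Ua Ub Uc Ud) : Ub ≤ Ud :=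
  Submodule.le_of_map_le_of_comp_eq_id (sum_proj_comp_single 0) hU.2.1 hU.2.2

theorem c_eq_top (hU : IsSubfunctor Ua Ub Uc Ud) (ha : Ua = ⊤) (hb : Ub = ⊤) : Uc = ⊤ := by
  refine top_unique (LinearMap.iSup_range_single K (fun _ : Fin 2 => K) ▸ iSup_le fun i => ?_)
  rw [← Submodule.map_top]
  fin_cases i
  · exact hb ▸ hU.2.1
  · exact ha ▸ hU.1

/-- In a decomposition `U ⊕ W`, the vertex `d` receives both `a` and `b` isomorphically,
so `a` and `b` lie on the same side; together they span `c`. -/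
theorem complement_eq_bot {Wa Wb Wd : Submodule K K} {Wc : Submodule K (Fin 2 → K)}
    (hU : IsSubfunctor Ua Ub Uc Ud) (hW : IsSubfunctor Wa Wb Wc Wd)
    (ha : IsCompl Ua Wa) (hb : IsCompl Ub Wb) (hc : IsCompl Uc Wc) (hd : IsCompl Ud Wd)
    (hUa : Ua = ⊤) : Wa = ⊥ ∧ Wb = ⊥ ∧ Wc = ⊥ ∧ Wd = ⊥ := by
  have hUd : Ud = ⊤ := top_unique (hUa ▸ hU.a_le_d)
  have hWd : Wd = ⊥ := eq_bot_of_top_isCompl (hUd ▸ hd)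
  have hWb : Wb = ⊥ := eq_bot_iff.2 (hWd ▸ hW.b_le_d)
  have hUc : Uc = ⊤ := hU.c_eq_top hUa (eq_top_of_bot_isCompl (hWb ▸ hb.symm))
  exact ⟨eq_bot_of_top_isCompl (hUa ▸ ha), hWb, eq_bot_of_top_isCompl (hUc ▸ hc), hWd⟩

end IsSubfunctor

end TwoPointFork

theorem stmt_14 (K : Type*) [Field K]
    (A B : K →ₗ[K] (Fin 2 → K)) (C : (Fin 2 → K) →ₗ[K] K)
    (hA : A = LinearMap.single K (fun _ : Fin 2 => K) 1)
    (hB : B = LinearMap.single K (fun _ : Fin 2 => K) 0)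
    (hC : C = (LinearMap.proj 0 : (Fin 2 → K) →ₗ[K] K) + LinearMap.proj 1) :
    ∀ (Ua Wa Ub Wb Ud Wd : Submodule K K) (Uc Wc : Submodule K (Fin 2 → K)),
      IsCompl Ua Wa → IsCompl Ub Wb → IsCompl Uc Wc → IsCompl Ud Wd →
      Ua.map A ≤ Uc → Wa.map A ≤ Wc →
      Ub.map B ≤ Uc → Wb.map B ≤ Wc →
      Uc.map C ≤ Ud → Wc.map C ≤ Wd →
      (Ua = ⊥ ∧ Ub = ⊥ ∧ Uc = ⊥ ∧ Ud = ⊥) ∨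
      (Wa = ⊥ ∧ Wb = ⊥ ∧ Wc = ⊥ ∧ Wd = ⊥) := by
  subst hA hB hC
  intro Ua Wa Ub Wb Ud Wd Uc Wc ha hb hc hd hUA hWA hUB hWB hUC hWC
  have hU : TwoPointFork.IsSubfunctor Ua Ub Uc Ud := ⟨hUA, hUB, hUC⟩
  have hW : TwoPointFork.IsSubfunctor Wa Wb Wc Wd := ⟨hWA, hWB, hWC⟩
  rcases eq_bot_or_eq_top Ua with hUa | hUa
  · exact .inl (hW.complement_eq_bot hU ha.symm hb.symm hc.symm hd.symm
      (eq_top_of_bot_isCompl (hUa ▸ ha)))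
  · exact .inr (hU.complement_eq_bot hW ha hb hc hd hUa)
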